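/- arXiv:1211.3393 — 3 statements merged into one kernel-verified Lean document; each statement's English description precedes it below -/
import Mathlib

section
/- Let h₁, h₂ ∈ C₀^∞(ℝ^d) have disjoint supports, set h_{i,t}(x) = h_i(x/t) for t ≥ 1, and let N > d. Then the Hilbert-Schmidt norm of the operator h_{1,t} g_N(D_x) h_{2,t} on L²(ℝ^d) (where h_{i,t} are multiplication operators and g_N(D_x) is the integral operator with kernel ⟨x−y⟩^{−N}) satisfies ‖h_{1,t} g_N(D_x) h_{2,t}‖_{HS} = O(t^{d−N}) as t → ∞. -/
open MeasureTheory Metric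

/-- Hilbert–Schmidt norm decay (Dybalski–Gérard, proof of Thm. 4.1):  if `h₁, h₂ ∈ C₀^∞(ℝ^d)`
have disjoint supports and `N > d`, then the Hilbert–Schmidt norm of
`h₁(x/t) g_N(D_x) h₂(x/t)`, i.e. the `L²` norm of the kernel
`(x,y) ↦ h₁(x/t) ⟨x-y⟩^{-N} h₂(y/t)`, is `O(t^{d-N})` as `t → ∞`. -/
theorem hilbert_schmidt_disjoint_supports_decay (d N : ℕ) (hN : d < N)
    (h₁ h₂ : EuclideanSpace ℝ (Fin d) → ℝ)
    (h₁smooth : ContDiff ℝ (⊤ : ℕ∞) h₁) (h₂smooth : ContDiff ℝ (⊤ : ℕ∞) h₂)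
    (h₁supp : HasCompactSupport h₁) (h₂supp : HasCompactSupport h₂)
    (hdisj : Disjoint (tsupport h₁) (tsupport h₂)) :
    ∃ C > 0, ∀ t : ℝ, 1 ≤ t →
      Real.sqrt (∫ x : EuclideanSpace ℝ (Fin d), ∫ y : EuclideanSpace ℝ (Fin d),
          (h₁ (t⁻¹ • x)) ^ 2 * (1 + ‖x - y‖ ^ 2) ^ (-(N:ℝ)) * (h₂ (t⁻¹ • y)) ^ 2)
        ≤ C * t ^ ((d:ℝ) - N) := by
  obtain ⟨δ, hδ, hthick⟩ := hdisj.exists_thickenings h₁supp h₂supp.isClosed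
  -- distance bound on supports
  have hsep : ∀ x y : EuclideanSpace ℝ (Fin d), x ∈ tsupport h₁ → y ∈ tsupport h₂ →
      δ ≤ ‖x - y‖ := by
    intro x y hx hy
    by_contra hlt
    push_neg at hlt
    have hxy : y ∈ thickening δ (tsupport h₁) := by
      rw [mem_thickening_iff]
      exact ⟨x, hx, by rwa [dist_eq_norm, norm_sub_rev]⟩
    have hy' : y ∈ thickening δ (tsupport h₂) :=
      self_subset_thickening hδ _ hy
    exact (hthick.le_bot ⟨hxy, hy'⟩)
  set A₁ : ℝ := ∫ x : EuclideanSpace ℝ (Fin d), (h₁ x) ^ 2 with hA₁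
  set A₂ : ℝ := ∫ x : EuclideanSpace ℝ (Fin d), (h₂ x) ^ 2 with hA₂
  have hA₁0 : 0 ≤ A₁ := integral_nonneg fun x => sq_nonneg _
  have hA₂0 : 0 ≤ A₂ := integral_nonneg fun x => sq_nonneg _
  refine ⟨Real.sqrt ((δ ^ (2 * N))⁻¹ * A₁ * A₂) + 1, by positivity, ?_⟩
  intro t ht
  have ht0 : (0:ℝ) < t := lt_of_lt_of_le one_pos ht
  have htne : t ≠ 0 := ht0.ne'
  -- integrability of scaled squares
  have hcont₁ : Continuous fun x : EuclideanSpace ℝ (Fin d) => (h₁ (t⁻¹ • x)) ^ 2 :=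
    (h₁smooth.continuous.comp (continuous_const_smul _)).pow 2
  have hcont₂ : Continuous fun x : EuclideanSpace ℝ (Fin d) => (h₂ (t⁻¹ • x)) ^ 2 :=
    (h₂smooth.continuous.comp (continuous_const_smul _)).pow 2
  have hcs₁ : HasCompactSupport fun x : EuclideanSpace ℝ (Fin d) => (h₁ (t⁻¹ • x)) ^ 2 :=
    (h₁supp.comp_left (g := fun s : ℝ => s ^ 2) (by simp)).comp_homeomorph
      (Homeomorph.smulOfNeZero (t⁻¹) (inv_ne_zero htne))
  have hcs₂ : HasCompactSupport fun x : EuclideanSpace ℝ (Fin d) => (h₂ (t⁻¹ • x)) ^ 2 :=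
    (h₂supp.comp_left (g := fun s : ℝ => s ^ 2) (by simp)).comp_homeomorph
      (Homeomorph.smulOfNeZero (t⁻¹) (inv_ne_zero htne))
  have hint₁ : Integrable (fun x : EuclideanSpace ℝ (Fin d) => (h₁ (t⁻¹ • x)) ^ 2) :=
    hcont₁.integrable_of_hasCompactSupport hcs₁
  have hint₂ : Integrable (fun x : EuclideanSpace ℝ (Fin d) => (h₂ (t⁻¹ • x)) ^ 2) :=
    hcont₂.integrable_of_hasCompactSupport hcs₂
  set c : ℝ := ((δ * t) ^ (2 * N))⁻¹ with hc
  have hc0 : 0 ≤ c := by positivity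
  -- pointwise bound
  have hpt : ∀ x y : EuclideanSpace ℝ (Fin d),
      (h₁ (t⁻¹ • x)) ^ 2 * (1 + ‖x - y‖ ^ 2) ^ (-(N:ℝ)) * (h₂ (t⁻¹ • y)) ^ 2
        ≤ c * ((h₁ (t⁻¹ • x)) ^ 2 * (h₂ (t⁻¹ • y)) ^ 2) := by
    intro x y
    by_cases hx : h₁ (t⁻¹ • x) = 0
    · simp [hx]
    by_cases hy : h₂ (t⁻¹ • y) = 0
    · simp [hy]
    have hxs : t⁻¹ • x ∈ tsupport h₁ := subset_tsupport _ hx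
    have hys : t⁻¹ • y ∈ tsupport h₂ := subset_tsupport _ hy
    have hdist : δ ≤ ‖t⁻¹ • x - t⁻¹ • y‖ := hsep _ _ hxs hys
    have hnorm : δ * t ≤ ‖x - y‖ := by
      have : ‖t⁻¹ • x - t⁻¹ • y‖ = t⁻¹ * ‖x - y‖ := by
        rw [← smul_sub, norm_smul, Real.norm_eq_abs, abs_inv, abs_of_pos ht0]
      rw [this] at hdist
      calc δ * t ≤ (t⁻¹ * ‖x - y‖) * t := by nlinarith
        _ = ‖x - y‖ := by field_simp
    have hmid : (1 + ‖x - y‖ ^ 2) ^ (-(N:ℝ)) ≤ c := by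
      have h1 : (0:ℝ) < 1 + ‖x - y‖ ^ 2 := by positivity
      rw [Real.rpow_neg h1.le, Real.rpow_natCast, hc]
      apply inv_anti₀ (by positivity)
      calc (δ * t) ^ (2 * N) = ((δ * t) ^ 2) ^ N := by rw [← pow_mul]
        _ ≤ (1 + ‖x - y‖ ^ 2) ^ N := by
            apply pow_le_pow_left₀ (by positivity)
            nlinarith [hnorm, mul_nonneg hδ.le ht0.le, norm_nonneg (x - y)]
    calc (h₁ (t⁻¹ • x)) ^ 2 * (1 + ‖x - y‖ ^ 2) ^ (-(N:ℝ)) * (h₂ (t⁻¹ • y)) ^ 2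
        ≤ (h₁ (t⁻¹ • x)) ^ 2 * c * (h₂ (t⁻¹ • y)) ^ 2 := by
          apply mul_le_mul_of_nonneg_right _ (sq_nonneg _)
          exact mul_le_mul_of_nonneg_left hmid (sq_nonneg _)
      _ = c * ((h₁ (t⁻¹ • x)) ^ 2 * (h₂ (t⁻¹ • y)) ^ 2) := by ring
  -- inner integral bound
  have hinner : ∀ x : EuclideanSpace ℝ (Fin d),
      (∫ y : EuclideanSpace ℝ (Fin d),
        (h₁ (t⁻¹ • x)) ^ 2 * (1 + ‖x - y‖ ^ 2) ^ (-(N:ℝ)) * (h₂ (t⁻¹ • y)) ^ 2)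
      ≤ c * (h₁ (t⁻¹ • x)) ^ 2 *
        (∫ y : EuclideanSpace ℝ (Fin d), (h₂ (t⁻¹ • y)) ^ 2) := by
    intro x
    rw [← integral_const_mul]
    apply integral_mono_of_nonneg
    · filter_upwards with y
      positivity
    · exact hint₂.const_mul _
    · filter_upwards with y
      calc (h₁ (t⁻¹ • x)) ^ 2 * (1 + ‖x - y‖ ^ 2) ^ (-(N:ℝ)) * (h₂ (t⁻¹ • y)) ^ 2
          ≤ c * ((h₁ (t⁻¹ • x)) ^ 2 * (h₂ (t⁻¹ • y)) ^ 2) := hpt x y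
        _ = c * (h₁ (t⁻¹ • x)) ^ 2 * (h₂ (t⁻¹ • y)) ^ 2 := by ring
  -- outer bound
  have houter : (∫ x : EuclideanSpace ℝ (Fin d), ∫ y : EuclideanSpace ℝ (Fin d),
        (h₁ (t⁻¹ • x)) ^ 2 * (1 + ‖x - y‖ ^ 2) ^ (-(N:ℝ)) * (h₂ (t⁻¹ • y)) ^ 2)
      ≤ c * (∫ x : EuclideanSpace ℝ (Fin d), (h₁ (t⁻¹ • x)) ^ 2) *
        (∫ y : EuclideanSpace ℝ (Fin d), (h₂ (t⁻¹ • y)) ^ 2) := by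
    have : c * (∫ x : EuclideanSpace ℝ (Fin d), (h₁ (t⁻¹ • x)) ^ 2) *
        (∫ y : EuclideanSpace ℝ (Fin d), (h₂ (t⁻¹ • y)) ^ 2)
        = ∫ x : EuclideanSpace ℝ (Fin d),
            c * (h₁ (t⁻¹ • x)) ^ 2 * (∫ y : EuclideanSpace ℝ (Fin d), (h₂ (t⁻¹ • y)) ^ 2) := by
      rw [integral_mul_const, integral_const_mul]
    rw [this]
    apply integral_mono_of_nonneg
    · filter_upwards with x
      apply integral_nonneg
      intro y
      positivity
    · apply Integrable.mul_const
      exact hint₁.const_mul _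
    · filter_upwards with x
      exact hinner x
  -- scaling
  have hscale₁ : (∫ x : EuclideanSpace ℝ (Fin d), (h₁ (t⁻¹ • x)) ^ 2) = t ^ d * A₁ := by
    rw [Measure.integral_comp_smul volume (fun x => (h₁ x) ^ 2) t⁻¹]
    rw [finrank_euclideanSpace_fin, smul_eq_mul, ← hA₁]
    congr 1
    rw [← inv_pow, inv_inv, abs_of_pos (by positivity)]
  have hscale₂ : (∫ x : EuclideanSpace ℝ (Fin d), (h₂ (t⁻¹ • x)) ^ 2) = t ^ d * A₂ := by
    rw [Measure.integral_comp_smul volume (fun x => (h₂ x) ^ 2) t⁻¹]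
    rw [finrank_euclideanSpace_fin, smul_eq_mul, ← hA₂]
    congr 1
    rw [← inv_pow, inv_inv, abs_of_pos (by positivity)]
  -- combine
  have hrpow : (0:ℝ) < t ^ ((d:ℝ) - N) := Real.rpow_pos_of_pos ht0 _
  set B : ℝ := (δ ^ (2 * N))⁻¹ * A₁ * A₂ with hB
  have hB0 : 0 ≤ B := by positivity
  have hkey : c * (t ^ d * A₁) * (t ^ d * A₂) = B * (t ^ ((d:ℝ) - N)) ^ 2 := by
    have h1 : (t ^ ((d:ℝ) - N)) ^ 2 = t ^ (2 * d) * (t ^ (2 * N))⁻¹ := by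
      rw [← Real.rpow_natCast t (2 * d), ← Real.rpow_natCast t (2 * N),
        ← Real.rpow_neg ht0.le, ← Real.rpow_add ht0, sq, ← Real.rpow_add ht0]
      congr 1
      push_cast
      ring
    rw [h1, hB, hc, mul_pow]
    field_simp
    ring
  calc Real.sqrt (∫ x : EuclideanSpace ℝ (Fin d), ∫ y : EuclideanSpace ℝ (Fin d),
          (h₁ (t⁻¹ • x)) ^ 2 * (1 + ‖x - y‖ ^ 2) ^ (-(N:ℝ)) * (h₂ (t⁻¹ • y)) ^ 2)
      ≤ Real.sqrt (B * (t ^ ((d:ℝ) - N)) ^ 2) := by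
        apply Real.sqrt_le_sqrt
        rw [← hkey]
        calc (∫ x : EuclideanSpace ℝ (Fin d), ∫ y : EuclideanSpace ℝ (Fin d),
            (h₁ (t⁻¹ • x)) ^ 2 * (1 + ‖x - y‖ ^ 2) ^ (-(N:ℝ)) * (h₂ (t⁻¹ • y)) ^ 2)
            ≤ c * (∫ x : EuclideanSpace ℝ (Fin d), (h₁ (t⁻¹ • x)) ^ 2) *
              (∫ y : EuclideanSpace ℝ (Fin d), (h₂ (t⁻¹ • y)) ^ 2) := houter
          _ = c * (t ^ d * A₁) * (t ^ d * A₂) := by rw [hscale₁, hscale₂]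
    _ = Real.sqrt B * t ^ ((d:ℝ) - N) := by
        rw [Real.sqrt_mul hB0, Real.sqrt_sq hrpow.le]
    _ ≤ (Real.sqrt ((δ ^ (2 * N))⁻¹ * A₁ * A₂) + 1) * t ^ ((d:ℝ) - N) := by
        rw [← hB]
        nlinarith [Real.sqrt_nonneg B, hrpow]
end

section
/- Let S ⊂ ℝ^{1+d} be a closed set with S ⊆ {0} ∪ H_m ∪ G_μ where m < μ ≤ 2m, H_m is the mass hyperboloid and G_μ = {(E,p) : E ≥ √(p²+μ²)}. Let Δ ⊂ G_{2m} be an open bounded set with (cl(Δ) − cl(Δ)) ∩ S = {0}, and let Δ₁, Δ₂ ⊂ H_m be disjoint compact sets with Δ₁ + Δ₂ ⊂ Δ. Then there exist disjoint open neighbourhoods O₁, O₂ of Δ₁, Δ₂ in ℝ^{1+d} such that for all compact sets K₁, K₂ with −K_i ⊂ O_i and (−K_i) ∩ S ⊂ Δ_i (i=1,2), the following hold: (a) (cl(Δ) + K₁ + K₂) ∩ S ⊂ {0}; (b) −(K₁+K₂) ⊂ Δ; (c) (Δ_i + K_i) ∩ S ⊂ {0} for i = 1,2; (d) (Δ_i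 + K_j) ∩ S = ∅ for i ≠ j. -/
open scoped Pointwise

/-- The mass hyperboloid `H_m = {(E,p) : E = √(p²+m²)}` in `ℝ^{1+d}`. -/
def massHyperboloid (d : ℕ) (m : ℝ) : Set (ℝ × EuclideanSpace ℝ (Fin d)) :=
  {q | q.1 = Real.sqrt (‖q.2‖ ^ 2 + m ^ 2)}

/-- The region `G_μ = {(E,p) : E ≥ √(p²+μ²)}` in `ℝ^{1+d}`. -/
def aboveHyperboloid (d : ℕ) (μ : ℝ) : Set (ℝ × EuclideanSpace ℝ (Fin d)) :=
  {q | Real.sqrt (‖q.2‖ ^ 2 + μ ^ 2) ≤ q.1}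

lemma sqrt_lip {u v c : ℝ} (hv : 0 ≤ v) (hc : 0 ≤ c) :
    Real.sqrt (u ^ 2 + c) ≤ Real.sqrt (v ^ 2 + c) + |u - v| := by
  have hvc : (0:ℝ) ≤ v ^ 2 + c := by positivity
  have hs := Real.sq_sqrt hvc
  have hs0 := Real.sqrt_nonneg (v ^ 2 + c)
  have hsv : v ≤ Real.sqrt (v ^ 2 + c) := by nlinarith
  have hB : (0:ℝ) ≤ Real.sqrt (v ^ 2 + c) + |u - v| := by positivity
  have h : u ^ 2 + c ≤ (Real.sqrt (v ^ 2 + c) + |u - v|) ^ 2 := by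
    nlinarith [sq_abs (u - v), le_abs_self (u - v), abs_nonneg (u - v),
      mul_le_mul_of_nonneg_right hsv (abs_nonneg (u - v)),
      mul_le_mul_of_nonneg_left (le_abs_self (u - v)) hv]
  calc Real.sqrt (u ^ 2 + c)
      ≤ Real.sqrt ((Real.sqrt (v ^ 2 + c) + |u - v|) ^ 2) := Real.sqrt_le_sqrt h
    _ = _ := Real.sqrt_sq hB

lemma sqrt_gap {t T m : ℝ} (ht : 0 ≤ t) (htT : t ≤ T) (hm : 0 < m) :
    t + m ^ 2 / (2 * T + m) ≤ Real.sqrt (t ^ 2 + m ^ 2) := by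
  have h0 : (0:ℝ) ≤ t ^ 2 + m ^ 2 := by positivity
  have hs := Real.sq_sqrt h0
  have hs0 := Real.sqrt_nonneg (t ^ 2 + m ^ 2)
  have hst : t ≤ Real.sqrt (t ^ 2 + m ^ 2) := by nlinarith
  have hstm : Real.sqrt (t ^ 2 + m ^ 2) ≤ t + m := by
    have h1 : t ^ 2 + m ^ 2 ≤ (t + m) ^ 2 := by nlinarith
    have := Real.sqrt_le_sqrt h1
    rwa [Real.sqrt_sq (by linarith)] at this
  have hT : (0:ℝ) < 2 * T + m := by linarith
  have : m ^ 2 / (2 * T + m) ≤ Real.sqrt (t ^ 2 + m ^ 2) - t := by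
    rw [div_le_iff₀ hT]; nlinarith
  linarith

lemma key_lemma (d : ℕ) (m μ R : ℝ) (hm : 0 < m) (hμ : m ≤ μ) (hR : 0 ≤ R) :
    ∃ ε : ℝ, 0 < ε ∧ ε ≤ 1 ∧ ∀ x z b : ℝ × EuclideanSpace ℝ (Fin d),
      x ∈ massHyperboloid d m → z ∈ massHyperboloid d m →
      ‖x‖ ≤ R → ‖z‖ ≤ R → ‖b‖ ≤ ε →
      x - (z + b) ∉ massHyperboloid d m ∧ x - (z + b) ∉ aboveHyperboloid d μ := by
  set T : ℝ := 2 * R + 1 with hTdef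
  have hT1 : (1:ℝ) ≤ T := by simp [hTdef]; linarith
  refine ⟨min 1 (m ^ 2 / (4 * T + 2 * m + 1)), lt_min one_pos (by positivity),
    min_le_left _ _, ?_⟩
  set ε := min 1 (m ^ 2 / (4 * T + 2 * m + 1)) with hεdef
  have hε1 : ε ≤ 1 := min_le_left _ _
  have hε2 : ε ≤ m ^ 2 / (4 * T + 2 * m + 1) := min_le_right _ _
  intro x z b hx hz hxR hzR hb
  have hb1 : |b.1| ≤ ε := le_trans (by simpa using norm_fst_le b) hb
  have hb2 : ‖b.2‖ ≤ ε := le_trans (norm_snd_le b) hb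
  set t := ‖x.2 - (z.2 + b.2)‖ with htdef
  have ht0 : 0 ≤ t := norm_nonneg _
  have hxz : ‖x.2 - z.2‖ ≤ t + ε := by
    calc ‖x.2 - z.2‖ = ‖(x.2 - (z.2 + b.2)) + b.2‖ := by congr 1; abel
      _ ≤ t + ‖b.2‖ := norm_add_le _ _
      _ ≤ t + ε := by linarith
  have h1 : x.1 - z.1 ≤ ‖x.2 - z.2‖ := by
    rw [hx, hz]
    have h2 := sqrt_lip (u := ‖x.2‖) (v := ‖z.2‖) (norm_nonneg z.2)
      (c := m ^ 2) (by positivity)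
    have habs : |‖x.2‖ - ‖z.2‖| ≤ ‖x.2 - z.2‖ := abs_norm_sub_norm_le _ _
    linarith
  have htT : t ≤ T := by
    have hx2 : ‖x.2‖ ≤ R := le_trans (norm_snd_le x) hxR
    have hz2 : ‖z.2‖ ≤ R := le_trans (norm_snd_le z) hzR
    calc t ≤ ‖x.2‖ + ‖z.2 + b.2‖ := norm_sub_le _ _
      _ ≤ ‖x.2‖ + (‖z.2‖ + ‖b.2‖) := by linarith [norm_add_le z.2 b.2]
      _ ≤ R + (R + 1) := by linarith
      _ = T := by rw [hTdef]; ring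
  have hgap := sqrt_gap ht0 htT hm
  have h2e : 2 * ε < m ^ 2 / (2 * T + m) := by
    have hd1 : (0:ℝ) < 4 * T + 2 * m + 1 := by linarith
    have hd2 : (0:ℝ) < 2 * T + m := by linarith
    have : 2 * (m ^ 2 / (4 * T + 2 * m + 1)) < m ^ 2 / (2 * T + m) := by
      rw [mul_div_assoc', div_lt_div_iff₀ hd1 hd2]; nlinarith
    linarith
  have hfst : (x - (z + b)).1 = x.1 - (z.1 + b.1) := rfl
  have hsnd : (x - (z + b)).2 = x.2 - (z.2 + b.2) := rfl
  have hmain : (x - (z + b)).1 < Real.sqrt (‖(x - (z + b)).2‖ ^ 2 + m ^ 2) := by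
    rw [hfst, hsnd, ← htdef]
    have hb1' : -ε ≤ b.1 := by cases abs_le.mp hb1; linarith
    linarith
  constructor
  · intro h
    exact hmain.ne (h : (x - (z + b)).1 = _)
  · intro h
    have h3 : Real.sqrt (‖(x - (z + b)).2‖ ^ 2 + m ^ 2)
        ≤ Real.sqrt (‖(x - (z + b)).2‖ ^ 2 + μ ^ 2) := by
      apply Real.sqrt_le_sqrt; nlinarith
    have h4 : Real.sqrt (‖(x - (z + b)).2‖ ^ 2 + μ ^ 2) ≤ (x - (z + b)).1 := h
    linarith

/-- Lemma 7.3 of Dybalski–Gérard:  existence of admissible neighbourhoods `O₁, O₂` of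
disjoint compact subsets `Δ₁, Δ₂` of the mass hyperboloid, for a spectrum
`S ⊆ {0} ∪ H_m ∪ G_μ` and a small open bounded region `Δ ⊆ G_{2m}`. -/
theorem admissible_neighbourhoods (d : ℕ) (m μ : ℝ)
    (hm : 0 < m) (hμ₁ : m < μ) (hμ₂ : μ ≤ 2 * m)
    (S : Set (ℝ × EuclideanSpace ℝ (Fin d))) (hScl : IsClosed S)
    (hS : S ⊆ {0} ∪ massHyperboloid d m ∪ aboveHyperboloid d μ)
    (Δ : Set (ℝ × EuclideanSpace ℝ (Fin d)))
    (hΔopen : IsOpen Δ) (hΔbd : Bornology.IsBounded Δ)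
    (hΔG : Δ ⊆ aboveHyperboloid d (2 * m))
    (hΔdiff : (closure Δ - closure Δ) ∩ S = {0})
    (Δ₁ Δ₂ : Set (ℝ × EuclideanSpace ℝ (Fin d)))
    (hΔ₁ : IsCompact Δ₁) (hΔ₂ : IsCompact Δ₂)
    (hΔ₁H : Δ₁ ⊆ massHyperboloid d m) (hΔ₂H : Δ₂ ⊆ massHyperboloid d m)
    (hdisj : Disjoint Δ₁ Δ₂) (hsum : Δ₁ + Δ₂ ⊆ Δ) :
    ∃ O₁ O₂ : Set (ℝ × EuclideanSpace ℝ (Fin d)),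
      IsOpen O₁ ∧ IsOpen O₂ ∧ Δ₁ ⊆ O₁ ∧ Δ₂ ⊆ O₂ ∧ Disjoint O₁ O₂ ∧
      ∀ K₁ K₂ : Set (ℝ × EuclideanSpace ℝ (Fin d)),
        IsCompact K₁ → IsCompact K₂ →
        -K₁ ⊆ O₁ → -K₂ ⊆ O₂ → (-K₁) ∩ S ⊆ Δ₁ → (-K₂) ∩ S ⊆ Δ₂ →
        ((closure Δ + K₁ + K₂) ∩ S ⊆ {0}) ∧
        (-(K₁ + K₂) ⊆ Δ) ∧
        ((Δ₁ + K₁) ∩ S ⊆ {0}) ∧ ((Δ₂ + K₂) ∩ S ⊆ {0}) ∧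
        ((Δ₁ + K₂) ∩ S = ∅) ∧ ((Δ₂ + K₁) ∩ S = ∅) := by
    classical
  -- a norm bound for Δ₁ ∪ Δ₂
  obtain ⟨R₀, hR₀⟩ := (hΔ₁.union hΔ₂).isBounded.exists_norm_le
  set R : ℝ := max R₀ 0 with hRdef
  have hR : 0 ≤ R := le_max_right _ _
  have hR₁ : ∀ q ∈ Δ₁, ‖q‖ ≤ R := fun q hq =>
    le_trans (hR₀ q (Or.inl hq)) (le_max_left _ _)
  have hR₂ : ∀ q ∈ Δ₂, ‖q‖ ≤ R := fun q hq =>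
    le_trans (hR₀ q (Or.inr hq)) (le_max_left _ _)
  -- the key quantitative radius
  obtain ⟨ε₁, hε₁pos, hε₁le1, hkey⟩ := key_lemma d m μ R hm hμ₁.le hR
  -- disjoint thickenings
  obtain ⟨ε₂, hε₂pos, hdisjthick⟩ := hdisj.exists_thickenings hΔ₁ hΔ₂.isClosed
  -- thickening of Δ₁ + Δ₂ inside Δ
  obtain ⟨ε₃, hε₃pos, hthick⟩ := (hΔ₁.add hΔ₂).exists_thickening_subset_open hΔopen hsum
  set ε : ℝ := min ε₁ (min ε₂ (ε₃ / 2)) with hεdef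
  have hεpos : 0 < ε := lt_min hε₁pos (lt_min hε₂pos (by linarith))
  have hεε₁ : ε ≤ ε₁ := min_le_left _ _
  have hεε₂ : ε ≤ ε₂ := le_trans (min_le_right _ _) (min_le_left _ _)
  have hεε₃ : 2 * ε ≤ ε₃ := by
    have h' : ε ≤ ε₃ / 2 := le_trans (min_le_right ε₁ (min ε₂ (ε₃ / 2))) (min_le_right ε₂ (ε₃ / 2))
    linarith
  set O₁ : Set (ℝ × EuclideanSpace ℝ (Fin d)) := Δ₁ + Metric.ball 0 ε with hO₁def
  set O₂ : Set (ℝ × EuclideanSpace ℝ (Fin d)) := Δ₂ + Metric.ball 0 ε with hO₂def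
  have hOopen : ∀ A : Set (ℝ × EuclideanSpace ℝ (Fin d)),
      IsOpen (A + Metric.ball 0 ε) := fun A => Metric.isOpen_ball.add_left
  have hOsub : ∀ A : Set (ℝ × EuclideanSpace ℝ (Fin d)),
      A ⊆ A + Metric.ball 0 ε := by
    intro A a ha
    exact ⟨a, ha, 0, Metric.mem_ball_self hεpos, add_zero a⟩
  have hOthick : ∀ (A : Set (ℝ × EuclideanSpace ℝ (Fin d))) (r : ℝ), ε ≤ r →
      A + Metric.ball 0 ε ⊆ Metric.thickening r A := by
    rintro A r hr x ⟨a, ha, u, hu, rfl⟩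
    rw [Metric.mem_thickening_iff]
    refine ⟨a, ha, ?_⟩
    have : dist (a + u) a = ‖u‖ := by
      rw [dist_eq_norm]; congr 1; abel
    rw [this]
    exact lt_of_lt_of_le (mem_ball_zero_iff.mp hu) hr
  have hdisjO : Disjoint O₁ O₂ :=
    hdisjthick.mono (hOthick Δ₁ ε₂ hεε₂) (hOthick Δ₂ ε₂ hεε₂)
  have hOΔ : O₁ + O₂ ⊆ Δ := by
    rintro x ⟨p, ⟨a, ha, u, hu, rfl⟩, q, ⟨b, hb, v, hv, rfl⟩, rfl⟩
    apply hthick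
    rw [Metric.mem_thickening_iff]
    refine ⟨a + b, Set.add_mem_add ha hb, ?_⟩
    have h1 : dist (a + u + (b + v)) (a + b) = ‖u + v‖ := by
      rw [dist_eq_norm]; congr 1; abel
    rw [h1]
    calc ‖u + v‖ ≤ ‖u‖ + ‖v‖ := norm_add_le _ _
      _ < ε + ε := add_lt_add (mem_ball_zero_iff.mp hu) (mem_ball_zero_iff.mp hv)
      _ ≤ ε₃ := by linarith
  refine ⟨O₁, O₂, hOopen Δ₁, hOopen Δ₂, hOsub Δ₁, hOsub Δ₂, hdisjO, ?_⟩
  intro K₁ K₂ hK₁c hK₂c hK₁O hK₂O hK₁S hK₂S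
  have hmemO₁ : ∀ k ∈ K₁, -k ∈ O₁ := fun k hk => hK₁O (Set.neg_mem_neg.mpr hk)
  have hmemO₂ : ∀ k ∈ K₂, -k ∈ O₂ := fun k hk => hK₂O (Set.neg_mem_neg.mpr hk)
  -- (b)
  have hbpart : -(K₁ + K₂) ⊆ Δ := by
    intro x hx
    rw [Set.mem_neg] at hx
    obtain ⟨k₁, hk₁, k₂, hk₂, hsum'⟩ := hx
    have hsum'' : k₁ + k₂ = -x := hsum'
    have hx' : x = (-k₁) + (-k₂) := by rw [← neg_add, hsum'', neg_neg]
    rw [hx']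
    exact hOΔ (Set.add_mem_add (hmemO₁ _ hk₁) (hmemO₂ _ hk₂))
  -- (a)
  have hapart : (closure Δ + K₁ + K₂) ∩ S ⊆ {0} := by
    rintro s ⟨⟨y, ⟨x, hx, k₁, hk₁, rfl⟩, k₂, hk₂, rfl⟩, hsS⟩
    have hw : -(k₁ + k₂) ∈ Δ := by
      apply hbpart
      rw [Set.mem_neg, neg_neg]
      exact Set.add_mem_add hk₁ hk₂
    have hmem : x + k₁ + k₂ ∈ closure Δ - closure Δ :=
      ⟨x, hx, -(k₁ + k₂), subset_closure hw, by abel⟩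
    rw [← hΔdiff]
    exact ⟨hmem, hsS⟩
  -- main pointwise lemma for (c), (d)
  have hcore : ∀ (A B : Set (ℝ × EuclideanSpace ℝ (Fin d)))
      (K : Set (ℝ × EuclideanSpace ℝ (Fin d))),
      A ⊆ massHyperboloid d m → B ⊆ massHyperboloid d m →
      (∀ q ∈ A, ‖q‖ ≤ R) → (∀ q ∈ B, ‖q‖ ≤ R) →
      (∀ k ∈ K, -k ∈ B + Metric.ball 0 ε) →
      ∀ x ∈ A, ∀ k ∈ K, (x + k ∈ S → x + k = 0 ∧ x ∈ B + Metric.ball 0 ε) := by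
    intro A B K hAH hBH hAR hBR hKB x hx k hk hxkS
    obtain ⟨z, hz, u, hu, hzu⟩ := hKB k hk
    have hzu' : z + u = -k := hzu
    have hxk : x + k = x - (z + u) := by rw [hzu', sub_neg_eq_add]
    have hnot := hkey x z u (hAH hx) (hBH hz) (hAR x hx) (hBR z hz)
      (le_trans (mem_ball_zero_iff.mp hu).le hεε₁)
    have h0 : x + k = 0 := by
      rcases hS hxkS with (h | h) | h
      · exact h
      · rw [hxk] at h; exact absurd h hnot.1
      · rw [hxk] at h; exact absurd h hnot.2
    refine ⟨h0, ?_⟩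
    have : x = z + u := by
      have : x - (z + u) = 0 := by rw [← hxk]; exact h0
      have := sub_eq_zero.mp this
      exact this
    rw [this]
    exact ⟨z, hz, u, hu, rfl⟩
  have hc₁ : (Δ₁ + K₁) ∩ S ⊆ {0} := by
    rintro s ⟨⟨x, hx, k, hk, rfl⟩, hsS⟩
    exact (hcore Δ₁ Δ₁ K₁ hΔ₁H hΔ₁H hR₁ hR₁ hmemO₁ x hx k hk hsS).1
  have hc₂ : (Δ₂ + K₂) ∩ S ⊆ {0} := by
    rintro s ⟨⟨x, hx, k, hk, rfl⟩, hsS⟩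
    exact (hcore Δ₂ Δ₂ K₂ hΔ₂H hΔ₂H hR₂ hR₂ hmemO₂ x hx k hk hsS).1
  have hd₁ : (Δ₁ + K₂) ∩ S = ∅ := by
    rw [Set.eq_empty_iff_forall_notMem]
    rintro s ⟨⟨x, hx, k, hk, rfl⟩, hsS⟩
    have h := (hcore Δ₁ Δ₂ K₂ hΔ₁H hΔ₂H hR₁ hR₂ hmemO₂ x hx k hk hsS).2
    exact Set.disjoint_left.mp hdisjO (hOsub Δ₁ hx) h
  have hd₂ : (Δ₂ + K₁) ∩ S = ∅ := by
    rw [Set.eq_empty_iff_forall_notMem]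
    rintro s ⟨⟨x, hx, k, hk, rfl⟩, hsS⟩
    have h := (hcore Δ₂ Δ₁ K₁ hΔ₂H hΔ₁H hR₂ hR₁ hmemO₁ x hx k hk hsS).2
    exact Set.disjoint_left.mp hdisjO h (hOsub Δ₂ hx)
  exact ⟨hapart, hbpart, hc₁, hc₂, hd₁, hd₂⟩
end

section
/- Let m < μ ≤ 2m and S = {0} ∪ H_m ∪ G_μ ⊂ ℝ^{1+d}. Let Δ ⊂ G_{2m} be open and bounded with (cl(Δ) − cl(Δ)) ∩ S = {0}. Let p̃₁, p̃₂ ∈ H_m with p̃₁ ≠ p̃₂ and p̃₁ + p̃₂ ∈ Δ. Then there exists ε > 0 such that for any compact sets K₁, K₂ ⊂ ℝ^{1+d} with −K_i ⊂ B(p̃_i, ε) and (−K_i) ∩ S ⊂ H_m (i = 1,2), one has: (i) −(K₁+K₂) ⊂ Δ; and (ii) (cl(Δ) + K₁ + K₂) ∩ S ⊂ {0}. -/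
open scoped Pointwise

/-- Δ-admissibility for small energy-momentum transfers (Remark after Def. 2.4 /
Lemma 7.3 of Dybalski–Gérard):  with `S = {0} ∪ H_m ∪ G_μ`, for `p̃₁ ≠ p̃₂` on `H_m`
with `p̃₁ + p̃₂ ∈ Δ` there is `ε > 0` such that any compact `K₁, K₂` with
`-Kᵢ ⊆ B(p̃ᵢ, ε)` and `(-Kᵢ) ∩ S ⊆ H_m` satisfy `-(K₁+K₂) ⊆ Δ` and
`(cl(Δ) + K₁ + K₂) ∩ S ⊆ {0}`. -/
theorem delta_admissibility_of_small_transfers (d : ℕ) (m μ : ℝ)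
    (hm : 0 < m) (hμ₁ : m < μ) (hμ₂ : μ ≤ 2 * m)
    (Δ : Set (ℝ × EuclideanSpace ℝ (Fin d)))
    (hΔopen : IsOpen Δ) (hΔbd : Bornology.IsBounded Δ)
    (hΔG : Δ ⊆ aboveHyperboloid d (2 * m))
    (hΔdiff : (closure Δ - closure Δ) ∩
      ({0} ∪ massHyperboloid d m ∪ aboveHyperboloid d μ) = {0})
    (p₁ p₂ : ℝ × EuclideanSpace ℝ (Fin d))
    (hp₁ : p₁ ∈ massHyperboloid d m) (hp₂ : p₂ ∈ massHyperboloid d m)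
    (hne : p₁ ≠ p₂) (hsum : p₁ + p₂ ∈ Δ) :
    ∃ ε > 0, ∀ K₁ K₂ : Set (ℝ × EuclideanSpace ℝ (Fin d)),
      IsCompact K₁ → IsCompact K₂ →
      -K₁ ⊆ Metric.ball p₁ ε → -K₂ ⊆ Metric.ball p₂ ε →
      (-K₁) ∩ ({0} ∪ massHyperboloid d m ∪ aboveHyperboloid d μ) ⊆ massHyperboloid d m →
      (-K₂) ∩ ({0} ∪ massHyperboloid d m ∪ aboveHyperboloid d μ) ⊆ massHyperboloid d m →
      (-(K₁ + K₂) ⊆ Δ) ∧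
      ((closure Δ + K₁ + K₂) ∩
        ({0} ∪ massHyperboloid d m ∪ aboveHyperboloid d μ) ⊆ {0}) := by
  obtain ⟨r, hr, hball⟩ := Metric.isOpen_iff.mp hΔopen _ hsum
  refine ⟨r / 2, by positivity, fun K₁ K₂ _ _ hK₁ hK₂ _ _ => ?_⟩
  have hmain : -(K₁ + K₂) ⊆ Δ := by
    intro x hx
    obtain ⟨a, ha, b, hb, hab⟩ := Set.mem_neg.mp hx
    have hab' : a + b = -x := hab
    have hxeq : x = -a + -b := by rw [← neg_add, hab', neg_neg]
    have h1 := Metric.mem_ball.mp (hK₁ (Set.neg_mem_neg.mpr ha))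
    have h2 := Metric.mem_ball.mp (hK₂ (Set.neg_mem_neg.mpr hb))
    apply hball
    rw [Metric.mem_ball, hxeq]
    calc dist (-a + -b) (p₁ + p₂) ≤ dist (-a) p₁ + dist (-b) p₂ := dist_add_add_le _ _ _ _
      _ < r / 2 + r / 2 := by linarith
      _ = r := by ring
  refine ⟨hmain, fun x ⟨hx, hxS⟩ => ?_⟩
  obtain ⟨y, hy, k₂, hk₂, rfl⟩ := hx
  obtain ⟨q, hq, k₁, hk₁, rfl⟩ := hy
  have hmem : -(k₁ + k₂) ∈ -(K₁ + K₂) :=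
    Set.neg_mem_neg.mpr (Set.add_mem_add hk₁ hk₂)
  have hd : q + k₁ + k₂ ∈ closure Δ - closure Δ := by
    have : q - -(k₁ + k₂) ∈ closure Δ - closure Δ :=
      Set.sub_mem_sub hq (subset_closure (hmain hmem))
    have heq : q - -(k₁ + k₂) = q + k₁ + k₂ := by abel
    rwa [heq] at this
  have := hΔdiff ▸ Set.mem_inter hd hxS
  exact this
end
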